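/- Fix real numbers b and g and a nonzero complex number c, and let K : ℝ × ℝ → ℂ be the simple-harmonic-oscillator propagator K(x,y) = c · exp(i (b(x² + y²) + g·x·y)) (for an oscillator of mass m and frequency ω evolving for a time T with sin(ωT) ≠ 0 one has b = −mω cot(ωT)/(2ħ), g = mω/(ħ sin(ωT))). Then K is continuous and nowhere zero, and for every ψ ∈ L²(ℝ) that is not almost everywhere zero, the ℂ-linear span of the set { χ_B · ψ_A : A ⊆ ℝ compact Lebesgue-measurable, B ⊆ ℝ bounded Lebesgue-measurable } is dense in L²(ℝ). -/

import Mathlib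

/-!
Let `h ∈ L²` be orthogonal to every `χ_B · ψ_A`. For fixed compact `A`, the locally integrable
function `conj ψ_A · h` then has zero integral over every compact `B`, so it vanishes a.e.
If `h ≠ 0`, some point `x₀` of `{h ≠ 0}` has no null neighbourhood in that set, and the continuous
function `ψ_A` must vanish there. Thus `∫_A K (x₀, y) ψ y dy = 0` for every compact `A`, so
`K (x₀, ·) ψ = 0` a.e., and `ψ = 0` a.e. because `K` has no zeros.
-/

open MeasureTheory

/-- The set of `L²` classes of the functions `χ_B · ψ_A` (`A` compact
measurable, `B` bounded measurable), where `ψ_A x = ∫_A K (x, y) ψ y dy`. -/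
def restrictedEvolutionSet (K : ℝ × ℝ → ℂ) (ψ : ℝ → ℂ) :
    Set (Lp ℂ 2 (volume : Measure ℝ)) :=
  {f | ∃ A B : Set ℝ,
    IsCompact A ∧ MeasurableSet A ∧ Bornology.IsBounded B ∧ MeasurableSet B ∧
    (f : ℝ → ℂ) =ᵐ[volume]
      fun x => Set.indicator B (fun _ => (1 : ℂ)) x * ∫ y in A, K (x, y) * ψ y}

open Complex ComplexConjugate Filter Topology

lemma Continuous.eq_zero_of_ae_mem_imp_eq_zero {X E : Type*} [TopologicalSpace X]
    [MeasurableSpace X] [TopologicalSpace E] [T2Space E] [Zero E] {μ : Measure X} {N : Set X}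
    {φ : X → E} (hφ : Continuous φ) (hN : ∀ᵐ x ∂μ, x ∈ N → φ x = 0) {x₀ : X}
    (hx₀ : ∀ u ∈ 𝓝[N] x₀, μ u ≠ 0) : φ x₀ = 0 := by
  by_contra hne
  have hU : N ∩ {x | φ x ≠ 0} ∈ 𝓝[N] x₀ :=
    inter_mem_nhdsWithin N ((isOpen_ne_fun hφ continuous_const).mem_nhds hne)
  refine hx₀ _ hU (measure_mono_null ?_ (ae_iff.mp hN))
  rintro x ⟨hxN, hx⟩ h
  exact hx (h hxN)

lemma Continuous.memLp_indicator_of_isBounded {X E : Type*} [PseudoMetricSpace X] [ProperSpace X]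
    [MeasurableSpace X] [OpensMeasurableSpace X] {μ : Measure X} [IsFiniteMeasureOnCompacts μ]
    [NormedAddCommGroup E] {f : X → E} (hf : Continuous f) {B : Set X}
    (hB : Bornology.IsBounded B) (hBm : MeasurableSet B) (p : ENNReal) :
    MemLp (B.indicator f) p μ := by
  obtain ⟨M, hM⟩ := hB.isCompact_closure.exists_bound_of_continuousOn hf.continuousOn
  have : IsFiniteMeasure (μ.restrict B) := isFiniteMeasure_restrict.mpr hB.measure_lt_top.ne
  rw [memLp_indicator_iff_restrict hBm]
  refine MemLp.of_bound hf.aestronglyMeasurable.restrict M ?_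
  exact (ae_restrict_iff' hBm).mpr (ae_of_all _ fun x hx => hM x (subset_closure hx))

section Kernel

variable {K : ℝ × ℝ → ℂ} {ψ : ℝ → ℂ}

lemma continuous_setIntegral_kernel_mul (hKc : Continuous K) {A : Set ℝ} (hA : IsCompact A)
    (hψ : IntegrableOn ψ A) : Continuous fun x => ∫ y in A, K (x, y) * ψ y := by
  refine continuous_iff_continuousAt.mpr fun x₀ => ?_
  obtain ⟨U, hU, hU₀⟩ := exists_compact_mem_nhds x₀
  obtain ⟨M, hM⟩ := (hU.prod hA).exists_bound_of_continuousOn hKc.continuousOn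
  refine continuousAt_of_dominated (bound := fun y => M * ‖ψ y‖) ?_ ?_
    (hψ.norm.const_mul M) (ae_of_all _ fun y => by fun_prop)
  · exact Eventually.of_forall fun x =>
      (hKc.comp (Continuous.prodMk_right x)).aestronglyMeasurable.mul hψ.aestronglyMeasurable
  · filter_upwards [hU₀] with x hx
    refine (ae_restrict_iff' hA.measurableSet).mpr (ae_of_all _ fun y hy => ?_)
    rw [norm_mul]
    exact mul_le_mul_of_nonneg_right (hM _ (Set.mk_mem_prod hx hy)) (norm_nonneg _)

lemma ae_conj_setIntegral_kernel_mul_eq_zero_of_mem_orthogonal (hKc : Continuous K)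
    (hψ : LocallyIntegrable ψ volume) {A : Set ℝ} (hA : IsCompact A)
    {h : Lp ℂ 2 (volume : Measure ℝ)}
    (hh : h ∈ (Submodule.span ℂ (restrictedEvolutionSet K ψ))ᗮ) :
    (fun x => conj (∫ y in A, K (x, y) * ψ y) * h x) =ᵐ[volume] 0 := by
  set ψA : ℝ → ℂ := fun x => ∫ y in A, K (x, y) * ψ y
  have hψA : Continuous ψA :=
    continuous_setIntegral_kernel_mul hKc hA (hψ.integrableOn_isCompact hA)
  refine ae_eq_zero_of_forall_setIntegral_isCompact_eq_zero'
    (((Lp.memLp h).locallyIntegrable one_le_two).continuous_mul (continuous_conj.comp hψA))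
    fun B hB => ?_
  have hmem := hψA.memLp_indicator_of_isBounded (μ := volume) hB.isBounded hB.measurableSet 2
  have hS : hmem.toLp _ ∈ restrictedEvolutionSet K ψ := by
    refine ⟨A, B, hA, hA.measurableSet, hB.isBounded, hB.measurableSet, ?_⟩
    filter_upwards [hmem.coeFn_toLp] with x hx
    by_cases hxB : x ∈ B <;> simp [hx, hxB, ψA]
  have horth := (Submodule.mem_orthogonal _ h).mp hh _ (Submodule.subset_span hS)
  rw [L2.inner_def] at horth
  calc ∫ x in B, conj (ψA x) * h x = ∫ x, conj (B.indicator ψA x) * h x := by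
        rw [← integral_indicator hB.measurableSet]
        congr 1 with x
        by_cases hxB : x ∈ B <;> simp [hxB]
    _ = ∫ x, inner ℂ (hmem.toLp _ x) (h x) := by
        refine integral_congr_ae ?_
        filter_upwards [hmem.coeFn_toLp] with x hx
        rw [hx, RCLike.inner_apply, mul_comm]
    _ = 0 := horth

theorem dense_span_restrictedEvolutionSet (hKc : Continuous K) (hK0 : ∀ p, K p ≠ 0)
    (hψ : LocallyIntegrable ψ volume) (hψ0 : ¬ ψ =ᵐ[volume] 0) :
    Dense (Submodule.span ℂ (restrictedEvolutionSet K ψ) :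
      Set (Lp ℂ 2 (volume : Measure ℝ))) := by
  rw [Submodule.dense_iff_topologicalClosure_eq_top, Submodule.topologicalClosure_eq_top_iff,
    Submodule.eq_bot_iff]
  intro h hh
  by_contra hne
  obtain ⟨x₀, -, hx₀⟩ : ∃ x₀ ∈ {x | h x ≠ 0}, ∀ u ∈ 𝓝[{x | h x ≠ 0}] x₀, volume u ≠ 0 := by
    by_contra! H
    exact hne (Lp.eq_zero_iff_ae_eq_zero.mpr (ae_iff.mpr (measure_null_of_locally_null _ H)))
  have hψA₀ : ∀ A, IsCompact A → ∫ y in A, K (x₀, y) * ψ y = 0 := by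
    intro A hA
    have hvanish : ∀ᵐ x, x ∈ {x | h x ≠ 0} → ∫ y in A, K (x, y) * ψ y = 0 :=
      (ae_conj_setIntegral_kernel_mul_eq_zero_of_mem_orthogonal hKc hψ hA hh).mono
        fun x hx hxN => by simpa using (mul_eq_zero.mp hx).resolve_right hxN
    exact (continuous_setIntegral_kernel_mul hKc hA
      (hψ.integrableOn_isCompact hA)).eq_zero_of_ae_mem_imp_eq_zero hvanish hx₀
  have hKψ : (fun y => K (x₀, y) * ψ y) =ᵐ[volume] 0 :=
    ae_eq_zero_of_forall_setIntegral_isCompact_eq_zero'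
      (hψ.continuous_mul (hKc.comp (Continuous.prodMk_right x₀))) hψA₀
  exact hψ0 (hKψ.mono fun y hy => (mul_eq_zero.mp hy).resolve_left (hK0 _))

end Kernel

/-- The simple-harmonic-oscillator propagator
`K(x,y) = c · exp(i (b (x² + y²) + g x y))` (with `c ≠ 0`) is continuous and
nowhere zero, and for every initial state `ψ ∈ L²(ℝ)` that is not almost
everywhere zero, the `ℂ`-span of the vectors `χ_B · ψ_A` (`A` compact
measurable, `B` bounded measurable) is dense in `L²(ℝ)`. -/
theorem stmt_16 (b g : ℝ) (c : ℂ) (hc : c ≠ 0)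
    (K : ℝ × ℝ → ℂ)
    (hK : K = fun p => c * Complex.exp
      (Complex.I * ((b : ℂ) * ((p.1 : ℂ) ^ 2 + (p.2 : ℂ) ^ 2)
        + (g : ℂ) * (p.1 : ℂ) * (p.2 : ℂ)))) :
    Continuous K ∧ (∀ p, K p ≠ 0) ∧
    ∀ ψ : ℝ → ℂ, MemLp ψ 2 volume → ¬ (ψ =ᵐ[(volume : Measure ℝ)] 0) →
      Dense (Submodule.span ℂ (restrictedEvolutionSet K ψ) :
        Set (Lp ℂ 2 (volume : Measure ℝ))) := by
  have hKc : Continuous K := by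
    subst hK
    fun_prop
  have hK0 : ∀ p, K p ≠ 0 := fun p => by
    subst hK
    exact mul_ne_zero hc (exp_ne_zero _)
  exact ⟨hKc, hK0, fun ψ hψ hψ0 =>
    dense_span_restrictedEvolutionSet hKc hK0 (hψ.locallyIntegrable one_le_two) hψ0⟩
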